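/- Let f : ℝ_+^k → int(ℝ_+^k) be a continuous positive concave mapping with fixed point x* ∈ int(ℝ_+^k), let U ⊂ int(ℝ_+^k) be a compact neighborhood of x*, let c ∈ [0,1) be a local contraction factor of f on U (with respect to Thompson's metric), and let ρ := ρ(f_∞) be the spectral radius of the asymptotic mapping f_∞(x) = lim_{p→∞} f(px)/p. Then c ≥ ρ. -/

import Mathlib

/-!
Let `u ≥ 0`, `u ≠ 0`, be an eigenvector of `f_∞` for `ρ`, scaled by `m` so that `u ≤ m x*` with
equality in some coordinate `i₀`. Concavity gives `f (x* + s u) ≥ f x* + s f_∞ u = x* + s ρ u`, so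
reading off coordinate `i₀` yields `d_T (f (x* + s u), x*) ≥ log (1 + ρ m s)`, while
`d_T (x* + s u, x*) = log (1 + m s)`. Contraction at the fixed point gives
`log (1 + ρ m s) ≤ c log (1 + m s)` for all small `s > 0`; dividing by `s` and letting `s → 0⁺`
gives `ρ m ≤ c m`.
-/

open Filter Topology Set

noncomputable def Mratio {k : ℕ} (x y : Fin k → ℝ) : ℝ :=
  sInf {β : ℝ | 0 < β ∧ ∀ i, x i ≤ β * y i}

noncomputable def dT {k : ℕ} (x y : Fin k → ℝ) : ℝ :=
  Real.log (max (Mratio x y) (Mratio y x))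

def posOrth (k : ℕ) : Set (Fin k → ℝ) := {x | ∀ i, 0 < x i}

def nonnegOrth (k : ℕ) : Set (Fin k → ℝ) := {x | ∀ i, 0 ≤ x i}

section Thompson

variable {k : ℕ} {x y : Fin k → ℝ} {a : ℝ}

lemma Mratio_nonneg : 0 ≤ Mratio x y :=
  Real.sInf_nonneg fun _ hβ => hβ.1.le

lemma Mratio_le (ha : 0 < a) (h : ∀ i, x i ≤ a * y i) : Mratio x y ≤ a :=
  csInf_le ⟨0, fun _ hβ => hβ.1.le⟩ ⟨ha, h⟩

lemma exists_pos_le_smul_of_mem_posOrth (hy : y ∈ posOrth k) :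
    ∃ β : ℝ, 0 < β ∧ ∀ i, x i ≤ β * y i := by
  have hterm : ∀ j, 0 ≤ |x j| / y j := fun j => div_nonneg (abs_nonneg _) (hy j).le
  have hsum : 0 ≤ ∑ j, |x j| / y j := Finset.sum_nonneg fun j _ => hterm j
  refine ⟨1 + ∑ j, |x j| / y j, by linarith, fun i => ?_⟩
  have hi : |x i| / y i ≤ ∑ j, |x j| / y j :=
    Finset.single_le_sum (f := fun j => |x j| / y j) (fun j _ => hterm j) (Finset.mem_univ i)
  calc x i ≤ |x i| / y i * y i := by rw [div_mul_cancel₀ _ (hy i).ne']; exact le_abs_self _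
    _ ≤ (1 + ∑ j, |x j| / y j) * y i := by have := (hy i).le; gcongr; linarith

lemma le_Mratio_of_mul_le_apply (hy : y ∈ posOrth k) (i : Fin k) (h : a * y i ≤ x i) :
    a ≤ Mratio x y := by
  obtain ⟨β, hβ⟩ := exists_pos_le_smul_of_mem_posOrth (x := x) hy
  refine le_csInf ⟨β, hβ⟩ fun b ⟨_, hb⟩ => ?_
  exact le_of_mul_le_mul_right (h.trans (hb i)) (hy i)

lemma log_le_dT_of_mul_le_apply (hy : y ∈ posOrth k) (ha : 0 < a) (i : Fin k)
    (h : a * y i ≤ x i) : Real.log a ≤ dT x y :=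
  Real.log_le_log ha ((le_Mratio_of_mul_le_apply hy i h).trans (le_max_left _ _))

lemma dT_le_log (ha : 1 ≤ a) (hxy : ∀ i, x i ≤ a * y i) (hyx : ∀ i, y i ≤ a * x i) :
    dT x y ≤ Real.log a := by
  have hmax : max (Mratio x y) (Mratio y x) ≤ a :=
    max_le (Mratio_le (by linarith) hxy) (Mratio_le (by linarith) hyx)
  rcases (le_max_of_le_left Mratio_nonneg : 0 ≤ max (Mratio x y) (Mratio y x)).eq_or_lt
    with h0 | hpos
  · rw [dT, ← h0, Real.log_zero]; exact Real.log_nonneg ha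
  · exact Real.log_le_log hpos hmax

lemma dT_add_smul_self {u : Fin k → ℝ} {m s : ℝ} (hx : x ∈ posOrth k) (hu : u ∈ nonnegOrth k)
    (hm : 0 ≤ m) (hs : 0 ≤ s) (hum : ∀ j, u j ≤ m * x j) {i : Fin k} (hi : u i = m * x i) :
    dT (x + s • u) x = Real.log (1 + m * s) := by
  have hms : 0 ≤ m * s := mul_nonneg hm hs
  refine le_antisymm (dT_le_log (by linarith) (fun j => ?_) (fun j => ?_))
    (log_le_dT_of_mul_le_apply hx (by linarith) i ?_)
  · have := mul_le_mul_of_nonneg_left (hum j) hs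
    simp only [Pi.add_apply, Pi.smul_apply, smul_eq_mul]; nlinarith
  · have := mul_nonneg hs (hu j)
    have := (hx j).le
    simp only [Pi.add_apply, Pi.smul_apply, smul_eq_mul]; nlinarith
  · simp only [Pi.add_apply, Pi.smul_apply, smul_eq_mul, hi]; linarith

end Thompson

lemma exists_le_smul_eq_apply {k : ℕ} {u x : Fin k → ℝ} (hu : u ∈ nonnegOrth k) (hu0 : u ≠ 0)
    (hx : x ∈ posOrth k) : ∃ m : ℝ, 0 < m ∧ (∀ j, u j ≤ m * x j) ∧ ∃ i, u i = m * x i := by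
  obtain ⟨j, hj⟩ := Function.ne_iff.mp hu0
  obtain ⟨i, -, hi⟩ := Finset.exists_max_image Finset.univ (fun i => u i / x i) ⟨j, by simp⟩
  refine ⟨u i / x i, ?_, fun l => ?_, i, (div_mul_cancel₀ _ (hx i).ne').symm⟩
  · exact (div_pos ((hu j).lt_of_ne' hj) (hx j)).trans_le (hi j (by simp))
  · exact (div_le_iff₀ (hx l)).mp (hi l (by simp))

/-- `f (x + s u) ≥ lim_p [(1 - s/p) f x + (s/p) f (p u)] = f x + s f_∞ u`, the points
`(1 - s/p) x + s u` converging to `x + s u` inside the orthant. -/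
lemma add_smul_asymptotic_le {k : ℕ} {f finf : (Fin k → ℝ) → (Fin k → ℝ)}
    (hcont : ContinuousOn f (nonnegOrth k))
    (hconc : ∀ x ∈ nonnegOrth k, ∀ y ∈ nonnegOrth k, ∀ t : ℝ, 0 < t → t < 1 →
      t • f x + (1 - t) • f y ≤ f (t • x + (1 - t) • y))
    (hlim : ∀ x ∈ nonnegOrth k,
      Tendsto (fun p : ℝ => p⁻¹ • f (p • x)) atTop (nhds (finf x)))
    {x u : Fin k → ℝ} (hx : x ∈ nonnegOrth k) (hu : u ∈ nonnegOrth k) {s : ℝ} (hs : 0 < s) :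
    f x + s • finf u ≤ f (x + s • u) := by
  have hratio : Tendsto (fun p : ℝ => 1 - s / p) atTop (𝓝 1) := by
    simpa using (tendsto_const_nhds (x := (1 : ℝ))).sub
      (tendsto_const_nhds.div_atTop tendsto_id)
  have hnonneg : ∀ {t : ℝ}, t ≤ 1 → (1 - t) • x + s • u ∈ nonnegOrth k := fun ht i =>
    add_nonneg (mul_nonneg (sub_nonneg.mpr ht) (hx i)) (mul_nonneg hs.le (hu i))
  have hupper : Tendsto (fun p : ℝ => f ((1 - s / p) • x + s • u)) atTop
      (𝓝 (f (x + s • u))) := by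
    refine (hcont _ (by simpa using hnonneg zero_le_one)).tendsto.comp
      (tendsto_nhdsWithin_iff.mpr ⟨by simpa using (hratio.smul_const x).add_const (s • u), ?_⟩)
    filter_upwards [eventually_gt_atTop 0, eventually_ge_atTop s] with p hp hsp
    exact hnonneg ((div_le_one hp).mpr hsp)
  have hlower : Tendsto (fun p : ℝ => (1 - s / p) • f x + s • (p⁻¹ • f (p • u))) atTop
      (𝓝 (f x + s • finf u)) := by
    simpa using (hratio.smul_const (f x)).add ((hlim u hu).const_smul s)
  refine le_of_tendsto_of_tendsto hlower hupper ?_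
  filter_upwards [eventually_gt_atTop s] with p hsp
  have hp : 0 < p := hs.trans hsp
  have hpu : p • u ∈ nonnegOrth k := fun i => mul_nonneg hp.le (hu i)
  have h := hconc _ hpu x hx (s / p) (div_pos hs hp) ((div_lt_one hp).mpr hsp)
  have harg : (s / p) • (p • u) + (1 - s / p) • x = (1 - s / p) • x + s • u := by
    rw [smul_smul, div_mul_cancel₀ _ hp.ne', add_comm]
  have hval : (s / p) • f (p • u) + (1 - s / p) • f x
      = (1 - s / p) • f x + s • (p⁻¹ • f (p • u)) := by
    rw [smul_smul, div_eq_mul_inv, add_comm]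
  rwa [harg, hval] at h

lemma le_of_eventually_log_one_add_mul_le {a b c : ℝ}
    (h : ∀ᶠ s : ℝ in 𝓝[>] 0, Real.log (1 + a * s) ≤ c * Real.log (1 + b * s)) :
    a ≤ c * b := by
  have hderiv : ∀ r : ℝ, Tendsto (fun s : ℝ => Real.log (1 + r * s) / s) (𝓝[>] 0) (𝓝 r) := by
    intro r
    have hd : HasDerivAt (fun s : ℝ => Real.log (1 + r * s)) r 0 := by
      simpa using (((hasDerivAt_id (0 : ℝ)).const_mul r).const_add 1).log (by simp)
    refine ((hasDerivAt_iff_tendsto_slope.mp hd).mono_left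
      (nhdsWithin_mono _ fun _ hs => ne_of_gt hs)).congr' ?_
    filter_upwards with s
    simp [slope_def_field]
  refine le_of_tendsto_of_tendsto (hderiv a) ((hderiv b).const_mul c) ?_
  filter_upwards [h, self_mem_nhdsWithin] with s hs (hs0 : 0 < s)
  rw [← mul_div_assoc]
  exact div_le_div_of_nonneg_right hs hs0.le

theorem stmt14_general {k : ℕ} (f finf : (Fin k → ℝ) → (Fin k → ℝ))
    (hcont : ContinuousOn f (nonnegOrth k))
    (hconc : ∀ x ∈ nonnegOrth k, ∀ y ∈ nonnegOrth k, ∀ t : ℝ, 0 < t → t < 1 →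
      t • f x + (1 - t) • f y ≤ f (t • x + (1 - t) • y))
    (xstar : Fin k → ℝ) (hxstar : xstar ∈ posOrth k) (hfix : f xstar = xstar)
    (U : Set (Fin k → ℝ))
    (hUnbhd : U ∈ nhds xstar)
    (c : ℝ)
    (hcontr : ∀ x ∈ U, ∀ y ∈ U, dT (f x) (f y) ≤ c * dT x y)
    (hlim : ∀ x ∈ nonnegOrth k,
      Tendsto (fun p : ℝ => p⁻¹ • f (p • x)) atTop (nhds (finf x)))
    (ρ : ℝ)
    (hρ : IsGreatest {l : ℝ | 0 ≤ l ∧ ∃ x ∈ nonnegOrth k, x ≠ 0 ∧ finf x = l • x} ρ) :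
    ρ ≤ c := by
  obtain ⟨⟨hρ0, u, hu, hu0, hfu⟩, -⟩ := hρ
  obtain ⟨m, hm, hum, i, hi⟩ := exists_le_smul_eq_apply hu hu0 hxstar
  have hxnn : xstar ∈ nonnegOrth k := fun j => (hxstar j).le
  have hnear : ∀ᶠ s : ℝ in 𝓝[>] 0, xstar + s • u ∈ U := by
    refine nhdsWithin_le_nhds (Tendsto.eventually ?_ hUnbhd)
    simpa using ((continuous_id.smul continuous_const).const_add xstar).tendsto (0 : ℝ)
  refine le_of_mul_le_mul_right (le_of_eventually_log_one_add_mul_le ?_) hm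
  filter_upwards [hnear, self_mem_nhdsWithin] with s hsU (hs : 0 < s)
  have hfz := add_smul_asymptotic_le hcont hconc hlim hxnn hu hs i
  simp only [hfix, hfu, Pi.add_apply, Pi.smul_apply, smul_eq_mul, hi] at hfz
  calc Real.log (1 + ρ * m * s)
      ≤ dT (f (xstar + s • u)) xstar :=
        log_le_dT_of_mul_le_apply hxstar (by positivity) i (by linarith)
    _ ≤ c * dT (xstar + s • u) xstar := by
        simpa only [hfix] using hcontr _ hsU _ (mem_of_mem_nhds hUnbhd)
    _ = c * Real.log (1 + m * s) := by rw [dT_add_smul_self hxstar hu hm.le hs.le hum hi]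

/-- Proposition 6: any local contraction factor c of a continuous
positive concave mapping around its fixed point is bounded below by the spectral
radius ρ of its asymptotic mapping. -/
theorem stmt14 {k : ℕ} (f finf : (Fin k → ℝ) → (Fin k → ℝ))
    (hpos : ∀ x ∈ nonnegOrth k, f x ∈ posOrth k)
    (hcont : ContinuousOn f (nonnegOrth k))
    (hconc : ∀ x ∈ nonnegOrth k, ∀ y ∈ nonnegOrth k, ∀ t : ℝ, 0 < t → t < 1 →
      t • f x + (1 - t) • f y ≤ f (t • x + (1 - t) • y))
    (xstar : Fin k → ℝ) (hxstar : xstar ∈ posOrth k) (hfix : f xstar = xstar)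
    (U : Set (Fin k → ℝ)) (hU : U ⊆ posOrth k) (hUc : IsCompact U)
    (hUnbhd : U ∈ nhds xstar)
    (c : ℝ) (hc0 : 0 ≤ c) (hc1 : c < 1)
    (hcontr : ∀ x ∈ U, ∀ y ∈ U, dT (f x) (f y) ≤ c * dT x y)
    (hlim : ∀ x ∈ nonnegOrth k,
      Tendsto (fun p : ℝ => p⁻¹ • f (p • x)) atTop (nhds (finf x)))
    (ρ : ℝ)
    (hρ : IsGreatest {l : ℝ | 0 ≤ l ∧ ∃ x ∈ nonnegOrth k, x ≠ 0 ∧ finf x = l • x} ρ) :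
    ρ ≤ c :=
  stmt14_general f finf hcont hconc xstar hxstar hfix U hUnbhd c hcontr hlim ρ hρ
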